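/- For every positive integer m, the 4-coloring of [8m+5] with prefix C, C, then the block ABCC repeated m times, then the block DDAB repeated m times, then D, B, A, contains no rainbow 4-term arithmetic progression, and each color class has at least ⌊(8m+5)/4⌋ elements. -/

import Mathlib

inductive Color | A | B | C | D
  deriving DecidableEq

open Color

/-- A coloring `c` of `{1,...,n}` contains a rainbow 4-term AP. -/
def RainbowAP4 (n : ℕ) (c : ℕ → Color) : Prop :=
  ∃ t d : ℕ, 1 ≤ t ∧ 1 ≤ d ∧ t + 3*d ≤ n ∧
    c t ≠ c (t+d) ∧ c t ≠ c (t+2*d) ∧ c t ≠ c (t+3*d) ∧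
    c (t+d) ≠ c (t+2*d) ∧ c (t+d) ≠ c (t+3*d) ∧ c (t+2*d) ≠ c (t+3*d)

/-- The coloring for STATEMENT 7. -/
def col (m i : ℕ) : Color :=
  if i ≤ 2 then C else if i ≤ 4*m+2 then (if i % 4 = 3 then A else if i % 4 = 0 then B else C) else if i ≤ 8*m+2 then (if i % 4 = 3 ∨ i % 4 = 0 then D else if i % 4 = 1 then A else B) else if i = 8*m+3 then D else if i = 8*m+4 then B else A

/-!
Colour A occupies only odd positions and B only even ones, so a rainbow AP(4) has odd
difference and its four terms meet each residue class mod 4 once. Every C lies before `4m+3`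
and every D after it, so the progression crosses from the first half, where the residues
`3, 0, 1, 2` carry `A, B, C, C`, into the second, where they carry `D, D, A, B` (with the one
exception of the B at `8m+4`). With one term before the crossing, A and B would need
residues 1 and 2 after it, one of which the C already holds; with three, the last term has
residue 1 or 2 and cannot be D; with two, the first two terms are C and A or B, so their
residues are 1 and 3 or 2 and 0, of equal parity although they differ by the odd difference.
-/

theorem col_eq_A_iff {m i : ℕ} (hi : i ≤ 8*m+5) :
    col m i = A ↔ (i ≤ 4*m+2 ∧ i % 4 = 3) ∨ (4*m+3 ≤ i ∧ i % 4 = 1) := by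
  unfold col; split_ifs <;> simp <;> omega

theorem col_eq_B_iff {m i : ℕ} (h1 : 1 ≤ i) (h2 : i ≤ 8*m+5) :
    col m i = B ↔ (i ≤ 4*m+2 ∧ i % 4 = 0) ∨ (4*m+3 ≤ i ∧ i % 4 = 2) ∨ i = 8*m+4 := by
  unfold col; split_ifs <;> simp <;> omega

theorem col_eq_C_iff {m i : ℕ} (hi : 1 ≤ i) :
    col m i = C ↔ i ≤ 4*m+2 ∧ (i % 4 = 1 ∨ i % 4 = 2) := by
  unfold col; split_ifs <;> simp <;> omega

theorem col_eq_D_iff {m i : ℕ} (hi : i ≤ 8*m+5) :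
    col m i = D ↔ 4*m+3 ≤ i ∧ (i % 4 = 3 ∨ i % 4 = 0) ∧ i ≠ 8*m+4 := by
  unfold col; split_ifs <;> simp <;> omega

theorem col_cases {m i : ℕ} (h1 : 1 ≤ i) (h2 : i ≤ 8*m+5) :
    (col m i = A ∧ ((i ≤ 4*m+2 ∧ i % 4 = 3) ∨ (4*m+3 ≤ i ∧ i % 4 = 1))) ∨
    (col m i = B ∧
      ((i ≤ 4*m+2 ∧ i % 4 = 0) ∨ (4*m+3 ≤ i ∧ i % 4 = 2) ∨ i = 8*m+4)) ∨
    (col m i = C ∧ i ≤ 4*m+2 ∧ (i % 4 = 1 ∨ i % 4 = 2)) ∨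
    (col m i = D ∧ 4*m+3 ≤ i ∧ (i % 4 = 3 ∨ i % 4 = 0) ∧ i ≠ 8*m+4) := by
  cases h : col m i
  · exact Or.inl ⟨rfl, (col_eq_A_iff h2).1 h⟩
  · exact Or.inr (Or.inl ⟨rfl, (col_eq_B_iff h1 h2).1 h⟩)
  · exact Or.inr (Or.inr (Or.inl ⟨rfl, (col_eq_C_iff h1).1 h⟩))
  · exact Or.inr (Or.inr (Or.inr ⟨rfl, (col_eq_D_iff h2).1 h⟩))

theorem not_rainbowAP4_col {m : ℕ} (hm : 0 < m) : ¬ RainbowAP4 (8*m+5) (col m) := by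
  rintro ⟨t, d, ht, hd, hn, h01, h02, h03, h12, h13, h23⟩
  rcases col_cases (m := m) (i := t) (by omega) (by omega) with
    ⟨e0, a0⟩ | ⟨e0, a0⟩ | ⟨e0, a0⟩ | ⟨e0, a0⟩ <;>
  rcases col_cases (m := m) (i := t+d) (by omega) (by omega) with
    ⟨e1, a1⟩ | ⟨e1, a1⟩ | ⟨e1, a1⟩ | ⟨e1, a1⟩ <;>
  rcases col_cases (m := m) (i := t+2*d) (by omega) (by omega) with
    ⟨e2, a2⟩ | ⟨e2, a2⟩ | ⟨e2, a2⟩ | ⟨e2, a2⟩ <;>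
  rcases col_cases (m := m) (i := t+3*d) (by omega) (by omega) with
    ⟨e3, a3⟩ | ⟨e3, a3⟩ | ⟨e3, a3⟩ | ⟨e3, a3⟩ <;>
  simp only [e0, e1, e2, e3, ne_eq, not_true_eq_false] at h01 h02 h03 h12 h13 h23 <;>
  omega

theorem le_card_filter_of_injOn {α : Type*} {s : Finset α} {p : α → Prop} [DecidablePred p]
    {k : ℕ} (f : ℕ → α) (hf : Set.InjOn f (Set.Iio k))
    (hmem : ∀ j < k, f j ∈ s ∧ p (f j)) :
    k ≤ (s.filter p).card := by
  simpa using Finset.card_le_card_of_injOn f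
    (fun j hj => Finset.mem_filter.2 (hmem j (Finset.mem_range.1 hj))) (by simpa using hf)

theorem two_mul_add_one_le_card_col (m : ℕ) (x : Color) :
    2*m+1 ≤ ((Finset.Icc 1 (8*m+5)).filter (fun i => col m i = x)).card := by
  cases x
  · refine le_card_filter_of_injOn (fun j => 4*j+3 + if m ≤ j then 2 else 0)
      (fun a _ b _ h => by simp only at h; split_ifs at h <;> omega) fun j hj => ?_
    split_ifs <;>
      exact ⟨Finset.mem_Icc.2 ⟨by omega, by omega⟩, (col_eq_A_iff (by omega)).2 (by omega)⟩
  · refine le_card_filter_of_injOn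
      (fun j => if j = 2*m then 8*m+4 else 4*j+4 + if m ≤ j then 2 else 0)
      (fun a ha b hb h => by simp only [Set.mem_Iio] at ha hb h; split_ifs at h <;> omega)
      fun j hj => ?_
    split_ifs <;>
      exact ⟨Finset.mem_Icc.2 ⟨by omega, by omega⟩,
        (col_eq_B_iff (by omega) (by omega)).2 (by omega)⟩
  · refine le_card_filter_of_injOn (fun j => 2*j+1 - j % 2)
      (fun a _ b _ h => by simp only at h; omega) fun j hj => ?_
    exact ⟨Finset.mem_Icc.2 ⟨by omega, by omega⟩, (col_eq_C_iff (by omega)).2 (by omega)⟩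
  · refine le_card_filter_of_injOn (fun j => 4*m+3 + 2*j - j % 2)
      (fun a _ b _ h => by simp only at h; omega) fun j hj => ?_
    exact ⟨Finset.mem_Icc.2 ⟨by omega, by omega⟩, (col_eq_D_iff (by omega)).2 (by omega)⟩

theorem stmt_7 (m : ℕ) (hm : 0 < m) :
    ¬ RainbowAP4 (8*m+5) (col m) ∧ ∀ x : Color, (8*m+5)/4 ≤ ((Finset.Icc 1 (8*m+5)).filter (fun i => col m i = x)).card := by
  refine ⟨not_rainbowAP4_col hm, fun x => ?_⟩
  have := two_mul_add_one_le_card_col m x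
  omega
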